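/- Let Q_tot : ℝ^M → ℝ be strictly monotone in each coordinate (if Q ≤ Q' componentwise and Qᵢ < Q'ᵢ for some i, then Q_tot(Q) < Q_tot(Q')). Let each agent i have a finite nonempty action set Aᵢ and local value function Qᵢ : Aᵢ → ℝ. If for every i, aᵢ* maximizes Qᵢ over Aᵢ, then the joint action (a₁*, …, a_M*) maximizes the function (a₁,…,a_M) ↦ Q_tot(Q₁(a₁), …, Q_M(a_M)) over A₁ × ⋯ × A_M. -/
import Mathlib

/-- QMIX IGM property: if the mixer `Qtot` is strictly monotone in each
coordinate and each `aStar i` maximizes the local `Q i`, then the joint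
action `aStar` maximizes the mixed value. -/
theorem qmix_igm (M : ℕ) (A : Fin M → Type) [∀ i, Fintype (A i)]
    [∀ i, Nonempty (A i)] (Q : (i : Fin M) → A i → ℝ)
    (Qtot : (Fin M → ℝ) → ℝ)
    (hmono : ∀ x y : Fin M → ℝ, x ≤ y → (∃ i, x i < y i) → Qtot x < Qtot y)
    (aStar : (i : Fin M) → A i)
    (hmax : ∀ i (a : A i), Q i a ≤ Q i (aStar i)) :
    ∀ a : (i : Fin M) → A i,
      Qtot (fun i => Q i (a i)) ≤ Qtot (fun i => Q i (aStar i)) := by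
  intro a
  by_cases h : ∀ i, Q i (a i) = Q i (aStar i)
  · have : (fun i => Q i (a i)) = fun i => Q i (aStar i) := funext h
    rw [this]
  · push_neg at h
    obtain ⟨i, hi⟩ := h
    exact le_of_lt (hmono _ _ (fun j => hmax j (a j)) ⟨i, lt_of_le_of_ne (hmax i (a i)) hi⟩)
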